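/- Let n ≥ 2 and let β_2, …, β_n be integers with |β_i| ≥ 2 for all i. Then the chain matrix A(0, −β_2, …, −β_n) with first diagonal entry 0 (viewed over ℝ) is nonsingular and its signature equals sgn(β_2) − Σ_{i=2}^n sgn(β_i). -/

import Mathlib

/-- The `n × n` chain (tridiagonal) matrix with diagonal entries
`d 1, …, d n` and off-diagonal entries `1`. -/
def chainMatrix (d : ℕ → ℝ) (n : ℕ) : Matrix (Fin n) (Fin n) ℝ :=
  Matrix.of fun i j =>
    if i = j then d (i.1 + 1)
    else if i.1 + 1 = j.1 ∨ j.1 + 1 = i.1 then 1 else 0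

/-- The signature of a real symmetric matrix: the number of positive
eigenvalues minus the number of negative eigenvalues, with multiplicity. -/
noncomputable def matSignature {n : ℕ} (A : Matrix (Fin n) (Fin n) ℝ)
    (hA : A.IsHermitian) : ℤ :=
  ((Finset.univ.filter fun i => 0 < hA.eigenvalues i).card : ℤ) -
  ((Finset.univ.filter fun i => hA.eigenvalues i < 0).card : ℤ)

/-!
Completing squares in the quadratic form `xᵀ A x` of a chain matrix, one variable at a time,
writes it as `∑ pₖ ℓₖ(x)²` with linearly independent forms `ℓₖ` and pivots
`pₖ₊₁ = dₖ₊₁ - 1 / pₖ`. By Sylvester's law of inertia the signature of `A` is `∑ sgn pₖ`, and `A`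
is nonsingular as soon as no pivot vanishes. Because the first diagonal entry is `0`, the
elimination runs from the last row upwards. While `|d| ≥ 2`, every pivot lies within `1` of its
diagonal entry and so has the same sign; the last pivot, `-1 / p`, has the sign opposite to the
pivot of `-β₂`, that is, the sign of `β₂`.
-/

open Finset Matrix

section Inertia

variable {V ι κ : Type*} [AddCommGroup V] [Module ℝ V] [Fintype ι] [Fintype κ]

theorem card_pos_le_of_sum_sq {Q : V → ℝ} {w : ι → ℝ} {v : κ → ℝ}
    (e : V ≃ₗ[ℝ] (ι → ℝ)) (f : V ≃ₗ[ℝ] (κ → ℝ))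
    (he : ∀ x, Q x = ∑ i, w i * e x i ^ 2) (hf : ∀ x, Q x = ∑ k, v k * f x k ^ 2) :
    #{i | 0 < w i} ≤ #{k | 0 < v k} := by
  classical
  let φ : V →ₗ[ℝ] ({i // ¬ 0 < w i} → ℝ) × ({k // 0 < v k} → ℝ) :=
    (LinearMap.funLeft ℝ ℝ Subtype.val ∘ₗ e.toLinearMap).prod
      (LinearMap.funLeft ℝ ℝ Subtype.val ∘ₗ f.toLinearMap)
  -- on `ker φ` the form is both `≥ 0` (through `e`) and `≤ 0` (through `f`)
  have hφ : Function.Injective φ := by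
    refine (injective_iff_map_eq_zero φ).2 fun x hx => ?_
    have he0 : ∀ i, ¬ 0 < w i → e x i = 0 := fun i hi => congr_fun (congr_arg Prod.fst hx) ⟨i, hi⟩
    have hf0 : ∀ k, 0 < v k → f x k = 0 := fun k hk => congr_fun (congr_arg Prod.snd hx) ⟨k, hk⟩
    have hterm : ∀ i, 0 ≤ w i * e x i ^ 2 := fun i => by
      by_cases hi : 0 < w i
      · positivity
      · simp [he0 i hi]
    have hQ : ∑ i, w i * e x i ^ 2 ≤ 0 := by
      rw [← he, hf]
      refine sum_nonpos fun k _ => ?_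
      by_cases hk : 0 < v k
      · simp [hf0 k hk]
      · exact mul_nonpos_of_nonpos_of_nonneg (not_lt.1 hk) (sq_nonneg _)
    have hzero := (sum_eq_zero_iff_of_nonneg fun i _ => hterm i).1
      (hQ.antisymm (sum_nonneg fun i _ => hterm i))
    have : e x = 0 := funext fun i => by
      by_cases hi : 0 < w i
      · simpa [hi.ne'] using hzero i (mem_univ i)
      · exact he0 i hi
    simpa using this
  have : FiniteDimensional ℝ V := e.symm.finiteDimensional
  have hdim := LinearMap.finrank_le_finrank_of_injective hφ
  rw [e.finrank_eq, Module.finrank_prod, Module.finrank_fintype_fun_eq_card,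
    Module.finrank_fintype_fun_eq_card, Module.finrank_fintype_fun_eq_card, Fintype.card_subtype,
    Fintype.card_subtype] at hdim
  have hsplit := card_filter_add_card_filter_not (s := univ) (fun i => 0 < w i)
  rw [card_univ] at hsplit
  omega

theorem card_pos_eq_of_sum_sq {Q : V → ℝ} {w : ι → ℝ} {v : κ → ℝ}
    (e : V ≃ₗ[ℝ] (ι → ℝ)) (f : V ≃ₗ[ℝ] (κ → ℝ))
    (he : ∀ x, Q x = ∑ i, w i * e x i ^ 2) (hf : ∀ x, Q x = ∑ k, v k * f x k ^ 2) :
    #{i | 0 < w i} = #{k | 0 < v k} :=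
  (card_pos_le_of_sum_sq e f he hf).antisymm (card_pos_le_of_sum_sq f e hf he)

theorem card_neg_eq_of_sum_sq {Q : V → ℝ} {w : ι → ℝ} {v : κ → ℝ}
    (e : V ≃ₗ[ℝ] (ι → ℝ)) (f : V ≃ₗ[ℝ] (κ → ℝ))
    (he : ∀ x, Q x = ∑ i, w i * e x i ^ 2) (hf : ∀ x, Q x = ∑ k, v k * f x k ^ 2) :
    #{i | w i < 0} = #{k | v k < 0} := by
  simpa using card_pos_eq_of_sum_sq (Q := -Q) (w := -w) (v := -v) e f
    (by simp [he, ← sum_neg_distrib]) (by simp [hf, ← sum_neg_distrib])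

end Inertia

theorem card_ne_zero_eq_card_pos_add_card_neg {ι : Type*} [Fintype ι] (w : ι → ℝ) :
    #{i | w i ≠ 0} = #{i | 0 < w i} + #{i | w i < 0} := by
  classical
  rw [← card_union_of_disjoint (disjoint_filter.2 fun _ _ h => not_lt.2 h.le), ← filter_or]
  simp_rw [ne_iff_lt_or_gt, or_comm]

theorem card_pos_sub_card_neg_eq_sum_sign {ι : Type*} [Fintype ι] (w : ι → ℝ) :
    (#{i | 0 < w i} : ℤ) - #{i | w i < 0} = ∑ i, (SignType.sign (w i) : ℤ) := by
  simp only [card_filter, Nat.cast_sum, ← sum_sub_distrib]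
  refine sum_congr rfl fun i _ => ?_
  rcases lt_trichotomy (w i) 0 with h | h | h
  · simp [h, h.not_gt]
  · simp [h]
  · simp [h, h.not_gt]

theorem Matrix.IsHermitian.exists_dotProduct_mulVec_eq_sum_eigenvalues {n : Type*} [Fintype n]
    [DecidableEq n] {A : Matrix n n ℝ} (hA : A.IsHermitian) :
    ∃ e : (n → ℝ) ≃ₗ[ℝ] (n → ℝ), ∀ x, x ⬝ᵥ A *ᵥ x = ∑ i, hA.eigenvalues i * e x i ^ 2 := by
  set U : Matrix n n ℝ := (hA.eigenvectorUnitary : Matrix n n ℝ)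
  refine ⟨UnitaryGroup.toLinearEquiv (star hA.eigenvectorUnitary), fun x => ?_⟩
  change _ = ∑ i, hA.eigenvalues i * (star U *ᵥ x) i ^ 2
  have hvec : x ᵥ* U = star U *ᵥ x := by
    rw [star_eq_conjTranspose, conjTranspose_eq_transpose_of_trivial, mulVec_transpose]
  conv_lhs => rw [hA.spectral_theorem, Unitary.conjStarAlgAut_apply]
  rw [← mulVec_mulVec, ← mulVec_mulVec, dotProduct_mulVec, hvec]
  simp only [dotProduct, mulVec_diagonal, Function.comp_apply, RCLike.ofReal_real_eq_id, id_eq]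
  exact sum_congr rfl fun i _ => by ring

theorem Matrix.det_ne_zero_of_sum_sq {n : Type*} [Fintype n] [DecidableEq n]
    {A : Matrix n n ℝ} (hA : A.IsHermitian) {w : n → ℝ} (hw : ∀ i, w i ≠ 0)
    (e : (n → ℝ) ≃ₗ[ℝ] (n → ℝ)) (h : ∀ x, x ⬝ᵥ A *ᵥ x = ∑ i, w i * e x i ^ 2) : A.det ≠ 0 := by
  obtain ⟨e₀, h₀⟩ := hA.exists_dotProduct_mulVec_eq_sum_eigenvalues
  have hcard : #{i | hA.eigenvalues i ≠ 0} = #(univ : Finset n) := by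
    rw [card_ne_zero_eq_card_pos_add_card_neg, card_pos_eq_of_sum_sq e₀ e h₀ h,
      card_neg_eq_of_sum_sq e₀ e h₀ h, ← card_ne_zero_eq_card_pos_add_card_neg,
      filter_true_of_mem fun i _ => hw i]
  rw [hA.det_eq_prod_eigenvalues]
  exact prod_ne_zero_iff.2 fun i _ => by
    simpa using card_filter_eq_iff.1 hcard i (mem_univ i)

theorem matSignature_eq_sum_sign {n : ℕ} {A : Matrix (Fin n) (Fin n) ℝ} (hA : A.IsHermitian)
    {w : Fin n → ℝ} (e : (Fin n → ℝ) ≃ₗ[ℝ] (Fin n → ℝ))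
    (h : ∀ x, x ⬝ᵥ A *ᵥ x = ∑ i, w i * e x i ^ 2) :
    matSignature A hA = ∑ i, (SignType.sign (w i) : ℤ) := by
  obtain ⟨e₀, h₀⟩ := hA.exists_dotProduct_mulVec_eq_sum_eigenvalues
  rw [matSignature, card_pos_eq_of_sum_sq e₀ e h₀ h, card_neg_eq_of_sum_sq e₀ e h₀ h,
    card_pos_sub_card_neg_eq_sum_sign]

-- `chainPivot d k` is the pivot of row `k + 1`: rows are numbered from `1`, as the entries of `d`.
noncomputable def chainPivot (d : ℕ → ℝ) : ℕ → ℝ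
  | 0 => d 1
  | k + 1 => d (k + 2) - (chainPivot d k)⁻¹

theorem sum_chain_eq_sum_chainPivot_sq (d X : ℕ → ℝ) (n : ℕ)
    (hp : ∀ k < n, chainPivot d k ≠ 0) :
    ∑ i ∈ range (n + 1), (d (i + 1) * X i ^ 2 + 2 * X i * X (i + 1)) =
      ∑ k ∈ range n, chainPivot d k * (X k + X (k + 1) / chainPivot d k) ^ 2 +
        chainPivot d n * X n ^ 2 + 2 * X n * X (n + 1) := by
  induction n with
  | zero => simp [chainPivot]
  | succ n ih =>
    have hpn := hp n n.lt_succ_self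
    rw [sum_range_succ, ih fun k hk => hp k (by omega), sum_range_succ, chainPivot]
    field_simp
    ring

theorem sum_chain_eq_sum_chainPivot_sq_of_eq_zero {d X : ℕ → ℝ} {n : ℕ}
    (hp : ∀ k, k + 1 < n → chainPivot d k ≠ 0) (hX : X n = 0) :
    ∑ i ∈ range n, (d (i + 1) * X i ^ 2 + 2 * X i * X (i + 1)) =
      ∑ k ∈ range n, chainPivot d k * (X k + X (k + 1) / chainPivot d k) ^ 2 := by
  cases n with
  | zero => simp
  | succ m =>
    rw [sum_chain_eq_sum_chainPivot_sq d X m fun k hk => hp k (by omega), sum_range_succ, hX]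
    simp

theorem extend_finVal_eq_zero {M : Type*} [Zero M] {n j : ℕ} (x : Fin n → M) (hj : n ≤ j) :
    Function.extend Fin.val x 0 j = 0 :=
  Function.extend_apply' _ _ _ fun ⟨i, hi⟩ => by omega

theorem dotProduct_chainMatrix_mulVec (d : ℕ → ℝ) {n : ℕ} (x : Fin n → ℝ) :
    x ⬝ᵥ chainMatrix d n *ᵥ x = ∑ i ∈ range n,
      (d (i + 1) * Function.extend Fin.val x 0 i ^ 2 +
        2 * Function.extend Fin.val x 0 i * Function.extend Fin.val x 0 (i + 1)) := by
  set X : ℕ → ℝ := Function.extend Fin.val x 0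
  have hX : ∀ i : Fin n, X i = x i := fun i => Fin.val_injective.extend_apply x 0 i
  set g : ℕ → ℕ → ℝ := fun a b => ((if b = a then d (a + 1) * X a ^ 2 else 0) +
    (if b = a + 1 then X a * X b else 0)) + (if a = b + 1 then X a * X b else 0)
  have hentry : ∀ i j : Fin n, x i * (chainMatrix d n i j * x j) = g i j := by
    intro i j
    rw [← hX i, ← hX j]
    simp only [chainMatrix, of_apply, Fin.ext_iff, g]
    generalize (i : ℕ) = a
    generalize (j : ℕ) = b
    split_ifs <;> subst_vars <;> first | omega | ring
  have hdiag : ∀ i ∈ range n, ∑ j ∈ range n, (if j = i then d (i + 1) * X i ^ 2 else 0) =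
      d (i + 1) * X i ^ 2 := fun i hi => by rw [sum_ite_eq', if_pos hi]
  have hnext : ∀ i, ∑ j ∈ range n, (if j = i + 1 then X i * X j else 0) = X i * X (i + 1) := by
    intro i
    rw [sum_ite_eq']
    split_ifs with h
    · rfl
    · rw [show X (i + 1) = 0 from extend_finVal_eq_zero x (by simpa using h), mul_zero]
  have hprev : ∀ j, ∑ i ∈ range n, (if i = j + 1 then X i * X j else 0) = X j * X (j + 1) := by
    intro j
    rw [← hnext j]
    exact sum_congr rfl fun i _ => by split_ifs <;> ring
  simp only [dotProduct, mulVec, mul_sum, hentry]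
  rw [Fin.sum_univ_eq_sum_range (fun i => ∑ j : Fin n, g i j)]
  simp only [fun i => Fin.sum_univ_eq_sum_range (g i), g, sum_add_distrib]
  rw [sum_comm (f := fun i j => if i = j + 1 then X i * X j else 0), sum_congr rfl hdiag]
  simp only [hnext, hprev, mul_assoc, ← mul_sum]
  ring

noncomputable def pivotCoords (p : ℕ → ℝ) (n : ℕ) : (Fin n → ℝ) →ₗ[ℝ] Fin n → ℝ where
  toFun x k := Function.ExtendByZero.linearMap ℝ Fin.val x k +
    Function.ExtendByZero.linearMap ℝ Fin.val x (k + 1) / p k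
  map_add' x y := by
    ext k
    simp only [map_add, Pi.add_apply]
    ring
  map_smul' c x := by
    ext k
    simp only [map_smul, Pi.smul_apply, smul_eq_mul, RingHom.id_apply]
    ring

theorem pivotCoords_injective (p : ℕ → ℝ) (n : ℕ) : Function.Injective (pivotCoords p n) := by
  refine (injective_iff_map_eq_zero _).2 fun x hx => ?_
  set X : ℕ → ℝ := Function.extend Fin.val x 0
  have hrow : ∀ k < n, X k + X (k + 1) / p k = 0 := fun k hk => congr_fun hx ⟨k, hk⟩
  have hX : ∀ k ≤ n, X k = 0 := by
    intro k hk
    induction hk using Nat.decreasingInduction with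
    | self => exact extend_finVal_eq_zero x le_rfl
    | of_succ k hk ih => simpa [ih] using hrow k hk
  funext i
  rw [← Fin.val_injective.extend_apply x 0 i]
  exact hX i i.2.le

theorem exists_chainMatrix_eq_sum_chainPivot_sq {d : ℕ → ℝ} {n : ℕ}
    (hp : ∀ k, k + 1 < n → chainPivot d k ≠ 0) :
    ∃ e : (Fin n → ℝ) ≃ₗ[ℝ] (Fin n → ℝ),
      ∀ x, x ⬝ᵥ chainMatrix d n *ᵥ x = ∑ k : Fin n, chainPivot d k * e x k ^ 2 := by
  refine ⟨.ofInjectiveEndo _ (pivotCoords_injective (chainPivot d) n), fun x => ?_⟩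
  rw [dotProduct_chainMatrix_mulVec, sum_chain_eq_sum_chainPivot_sq_of_eq_zero hp
    (extend_finVal_eq_zero x le_rfl), ← Fin.sum_univ_eq_sum_range]
  rfl

theorem Matrix.dotProduct_submatrix_mulVec_comp_equiv {m n : Type*} [Fintype m] [Fintype n]
    (M : Matrix n n ℝ) (σ : m ≃ n) (x : n → ℝ) :
    x ∘ σ ⬝ᵥ M.submatrix σ σ *ᵥ (x ∘ σ) = x ⬝ᵥ M *ᵥ x := by
  rw [submatrix_mulVec_equiv, Function.comp_assoc, σ.self_comp_symm, Function.comp_id,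
    comp_equiv_dotProduct_comp_equiv]

theorem chainMatrix_submatrix_rev (d : ℕ → ℝ) (n : ℕ) :
    (chainMatrix d n).submatrix Fin.revPerm Fin.revPerm =
      chainMatrix (fun j => d (n + 1 - j)) n := by
  ext i j
  simp only [chainMatrix, submatrix_apply, of_apply, Fin.revPerm_apply, Fin.rev_inj, Fin.val_rev]
  split_ifs <;> first | rfl | omega | (congr 1; omega)

theorem exists_chainMatrix_eq_sum_chainPivot_rev_sq {d : ℕ → ℝ} {n : ℕ}
    (hp : ∀ k, k + 1 < n → chainPivot (fun j => d (n + 1 - j)) k ≠ 0) :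
    ∃ e : (Fin n → ℝ) ≃ₗ[ℝ] (Fin n → ℝ), ∀ x, x ⬝ᵥ chainMatrix d n *ᵥ x =
      ∑ k : Fin n, chainPivot (fun j => d (n + 1 - j)) k * e x k ^ 2 := by
  obtain ⟨e, he⟩ := exists_chainMatrix_eq_sum_chainPivot_sq hp
  refine ⟨(LinearEquiv.funCongrLeft ℝ ℝ Fin.revPerm).trans e, fun x => ?_⟩
  rw [← dotProduct_submatrix_mulVec_comp_equiv _ Fin.revPerm, chainMatrix_submatrix_rev]
  exact he _

theorem Finset.sum_range_sub_eq_sum_Icc {M : Type*} [AddCommMonoid M] (f : ℕ → M) (a m : ℕ) :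
    ∑ k ∈ range (m + 1), f (m + a - k) = ∑ j ∈ Icc a (m + a), f j := by
  rw [← Nat.Ico_zero_eq_range, sum_Ico_reflect f 0 (by omega : m + 1 ≤ m + a + 1)]
  congr 1
  ext j
  simp only [mem_Ico, mem_Icc]
  omega

theorem abs_chainPivot_sub_le {d : ℕ → ℝ} {m : ℕ} (hd : ∀ k < m, 2 ≤ |d (k + 1)|) :
    |chainPivot d m - d (m + 1)| ≤ 1 := by
  induction m with
  | zero => simp [chainPivot]
  | succ m ih =>
    have hp : 1 ≤ |chainPivot d m| := by
      have := abs_sub_abs_le_abs_sub (d (m + 1)) (chainPivot d m)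
      rw [abs_sub_comm] at this
      linarith [ih fun k hk => hd k (by omega), hd m (by omega)]
    rw [chainPivot, sub_sub_cancel_left, abs_neg, abs_inv]
    exact inv_le_one_of_one_le₀ hp

theorem sign_chainPivot {d : ℕ → ℝ} {m : ℕ} (hd : ∀ k ≤ m, 2 ≤ |d (k + 1)|) :
    SignType.sign (chainPivot d m) = SignType.sign (d (m + 1)) := by
  have hclose := abs_le.1 (abs_chainPivot_sub_le fun k hk => hd k hk.le)
  rcases le_abs'.1 (hd m le_rfl) with h | h
  · rw [sign_neg (by linarith), sign_neg (by linarith)]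
  · rw [sign_pos (by linarith), sign_pos (by linarith)]

theorem sign_chainPivot_succ_of_eq_zero {d : ℕ → ℝ} {m : ℕ} (h0 : d (m + 2) = 0) :
    SignType.sign (chainPivot d (m + 1)) = -SignType.sign (chainPivot d m) := by
  rw [chainPivot, h0, zero_sub, Left.sign_neg]
  rcases lt_trichotomy (chainPivot d m) 0 with h | h | h
  · rw [sign_neg h, sign_neg (inv_lt_zero.2 h)]
  · simp [h]
  · rw [sign_pos h, sign_pos (inv_pos.2 h)]

theorem chainMatrix_det_ne_zero_and_matSignature {n : ℕ} (hn : 2 ≤ n) {d : ℕ → ℝ}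
    (hd1 : d 1 = 0) (hd : ∀ j, 2 ≤ j → j ≤ n → 2 ≤ |d j|) (hA : (chainMatrix d n).IsHermitian) :
    (chainMatrix d n).det ≠ 0 ∧ matSignature (chainMatrix d n) hA =
      ∑ j ∈ Icc 2 n, (SignType.sign (d j) : ℤ) - SignType.sign (d 2) := by
  obtain ⟨m, rfl⟩ : ∃ m, n = m + 2 := ⟨n - 2, by omega⟩
  set r : ℕ → ℝ := fun j => d (m + 2 + 1 - j)
  have hd0 : ∀ j, 2 ≤ j → j ≤ m + 2 → SignType.sign (d j) ≠ 0 := fun j h2 hj h => by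
    have := hd j h2 hj
    rw [sign_eq_zero_iff.1 h, abs_zero] at this
    norm_num at this
  have hsign : ∀ k ≤ m, SignType.sign (chainPivot r k) = SignType.sign (d (m + 2 - k)) := by
    intro k hk
    rw [sign_chainPivot (d := r) (m := k) fun j hj => hd _ (by omega) (by omega)]
    simp only [r, show m + 2 + 1 - (k + 1) = m + 2 - k by omega]
  have hlast : SignType.sign (chainPivot r (m + 1)) = -SignType.sign (d 2) := by
    rw [sign_chainPivot_succ_of_eq_zero (by simp [r, hd1]), hsign m le_rfl,
      Nat.add_sub_cancel_left]
  have hp : ∀ k < m + 2, chainPivot r k ≠ 0 := by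
    intro k hk
    rw [← sign_ne_zero]
    rcases (show k ≤ m ∨ k = m + 1 by omega) with hk | rfl
    · exact hsign k hk ▸ hd0 _ (by omega) (by omega)
    · simpa [hlast] using hd0 2 le_rfl hn
  obtain ⟨e, he⟩ := exists_chainMatrix_eq_sum_chainPivot_rev_sq (d := d) (n := m + 2)
    fun k hk => hp k (by omega)
  refine ⟨det_ne_zero_of_sum_sq hA (fun k => hp k k.2) e he, ?_⟩
  rw [matSignature_eq_sum_sign hA e he,
    Fin.sum_univ_eq_sum_range (fun k : ℕ => (SignType.sign (chainPivot r k) : ℤ)),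
    sum_range_succ, hlast, sum_congr rfl fun k hk => by
      rw [hsign k (Nat.lt_succ_iff.1 (mem_range.1 hk))],
    sum_range_sub_eq_sum_Icc (fun j => (SignType.sign (d j) : ℤ)), SignType.coe_neg,
    sub_eq_add_neg]

/-- for `n ≥ 2` and integers `β 2, …, β n` with `|β i| ≥ 2`,
the chain matrix `A(0, -β 2, …, -β n)` over ℝ is nonsingular and its signature
is `sgn (β 2) - ∑_{i=2}^n sgn (β i)`. -/
theorem stmt10 (n : ℕ) (hn : 2 ≤ n) (β : ℕ → ℤ)
    (hβ : ∀ i, 2 ≤ i → i ≤ n → 2 ≤ |β i|)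
    (hA : (chainMatrix (fun j => if j = 1 then (0 : ℝ) else -(β j : ℝ)) n).IsHermitian) :
    (chainMatrix (fun j => if j = 1 then (0 : ℝ) else -(β j : ℝ)) n).det ≠ 0 ∧
    matSignature (chainMatrix (fun j => if j = 1 then (0 : ℝ) else -(β j : ℝ)) n) hA =
      Int.sign (β 2) - ∑ i ∈ Finset.Icc 2 n, Int.sign (β i) := by
  have hd : ∀ j, 2 ≤ j → (if j = 1 then (0 : ℝ) else -(β j : ℝ)) = -(β j : ℝ) :=
    fun j hj => if_neg (by omega)
  have hsign : ∀ j, 2 ≤ j →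
      (SignType.sign (if j = 1 then (0 : ℝ) else -(β j : ℝ)) : ℤ) = -Int.sign (β j) := by
    intro j hj
    rw [hd j hj, Left.sign_neg, sign_intCast, Int.sign_eq_sign, SignType.coe_neg]
  obtain ⟨hdet, hsig⟩ := chainMatrix_det_ne_zero_and_matSignature hn (by simp)
    (fun j hj hjn => by rw [hd j hj, abs_neg, ← Int.cast_abs]; exact_mod_cast hβ j hj hjn) hA
  refine ⟨hdet, ?_⟩
  rw [hsig, sum_congr rfl fun j hj => hsign j (mem_Icc.1 hj).1, hsign 2 le_rfl, sum_neg_distrib]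
  ring
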